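/- The Borel measure ν_o on (G−2, G) with density v ↦ 1/(1+v) with respect to Lebesgue measure is finite and τ_o-invariant: ν_o(τ_o⁻¹(A)) = ν_o(A) for every Borel set A ⊆ (G−2,G). -/

import Mathlib

open Set MeasureTheory

/-- The golden ratio `G = (1+√5)/2`. -/
noncomputable def G : ℝ := (1 + Real.sqrt 5) / 2

/-- `b_o(y)`: the unique odd integer in the interval `[1/|y| − G, 1/|y| − G + 2]`,
namely the smallest odd integer `≥ 1/|y| − G`. -/
noncomputable def bO (y : ℝ) : ℤ :=
  if Odd ⌈1 / |y| - G⌉ then ⌈1 / |y| - G⌉ else ⌈1 / |y| - G⌉ + 1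

/-- The grotesque-continued-fraction Gauss map `τ_o(y) = 1/|y| − b_o(y)`. -/
noncomputable def tauO (y : ℝ) : ℝ := 1 / |y| - (bO y : ℝ)

/-- The measure `ν_o` on `(G−2, G)` with density `v ↦ 1/(1+v)` with respect to
Lebesgue measure. -/
noncomputable def nuO : Measure ℝ :=
  ((volume : Measure ℝ).restrict (Ioo (G - 2) G)).withDensity
    (fun v => ENNReal.ofReal (1 / (1 + v)))

/-!
On `(G-2, 0) ∪ (0, G)` the map `τ_o` has the inverse branches `x ↦ 1/(b+x)` (`b ≥ 1` odd) and
`x ↦ -1/(b+x)` (`b ≥ 3` odd), each sending `(G-2, G)` back into `(G-2, G)` because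
`G (G-1) = 1` and `(G+1)(2-G) = 1`. Pulling the density `1/(1+y)` back along `y = ε/(b+x)` gives
`1/((b+x)(b+x+ε))`, so the positive branches contribute `1/((n+x)(n+1+x))` for odd `n` and the
negative ones the same term for even `n ≥ 2`. Together these telescope to `1/(1+x)`.
-/

open Filter Topology

lemma one_lt_G : 1 < G := Real.one_lt_goldenRatio

lemma G_lt_two : G < 2 := Real.goldenRatio_lt_two

lemma G_sq : G ^ 2 = G + 1 := Real.goldenRatio_sq

lemma neg_one_lt_of_mem_Ioo {x : ℝ} (hx : x ∈ Ioo (G - 2) G) : -1 < x := by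
  linarith [hx.1, one_lt_G]

lemma odd_bO (y : ℝ) : Odd (bO y) := by
  unfold bO
  split_ifs with h
  · exact h
  · exact (Int.not_odd_iff_even.mp h).add_one

lemma ceil_le_bO (y : ℝ) : ⌈1 / |y| - G⌉ ≤ bO y := by
  unfold bO; split_ifs <;> omega

lemma bO_eq_of_odd {y : ℝ} {b : ℤ} (hb : Odd b) (h₁ : (b : ℝ) - 2 < 1 / |y| - G)
    (h₂ : 1 / |y| - G ≤ b) : bO y = b := by
  have hle : ⌈1 / |y| - G⌉ ≤ b := Int.ceil_le.mpr h₂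
  have hlt : b - 2 < ⌈1 / |y| - G⌉ := Int.lt_ceil.mpr (by push_cast; exact h₁)
  have hodd := odd_bO y
  have hge := ceil_le_bO y
  have hle' : bO y ≤ ⌈1 / |y| - G⌉ + 1 := by unfold bO; split_ifs <;> omega
  rcases hb with ⟨m, rfl⟩
  rcases hodd with ⟨m', hm'⟩
  omega

lemma bO_add_tauO (y : ℝ) : (bO y : ℝ) + tauO y = 1 / |y| := by
  unfold tauO; ring

lemma measurable_bO : Measurable bO :=
  (measurable_from_top (f := fun n : ℤ => if Odd n then n else n + 1)).comp
    ((measurable_const.div measurable_abs).sub_const G).ceil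

lemma measurable_tauO : Measurable tauO :=
  (measurable_const.div measurable_abs).sub (measurable_from_top.comp measurable_bO)

/-- The inverse branch of `τ_o` through the points `y` with sign `ε` and `b_o(y) = b`. -/
noncomputable def branch (ε : ℝ) (b : ℤ) (x : ℝ) : ℝ := ε / (b + x)

section branch

variable {ε : ℝ} {b : ℤ} {x : ℝ}

lemma add_pos_of_mem_Ioo (hb : 1 ≤ b) (hx : x ∈ Ioo (G - 2) G) : 0 < b + x := by
  have : (1 : ℝ) ≤ b := by exact_mod_cast hb
  linarith [neg_one_lt_of_mem_Ioo hx]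

lemma one_div_abs_branch (hε : |ε| = 1) (hbx : 0 < b + x) : 1 / |branch ε b x| = b + x := by
  rw [branch, abs_div, hε, abs_of_pos hbx, one_div_one_div]

lemma bO_branch (hε : |ε| = 1) (hb : Odd b) (hx : x ∈ Ioo (G - 2) G) (hbx : 0 < b + x) :
    bO (branch ε b x) = b := by
  obtain ⟨hx₁, hx₂⟩ := hx
  apply bO_eq_of_odd hb <;> rw [one_div_abs_branch hε hbx] <;> linarith

lemma tauO_branch (hε : |ε| = 1) (hb : Odd b) (hx : x ∈ Ioo (G - 2) G) (hbx : 0 < b + x) :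
    tauO (branch ε b x) = x := by
  rw [tauO, one_div_abs_branch hε hbx, bO_branch hε hb hx hbx]; ring

lemma branch_injective (hε : ε ≠ 0) : Function.Injective (branch ε b) := fun x x' h =>
  add_left_cancel <| inv_injective <| mul_left_cancel₀ hε <| by
    simpa only [branch, div_eq_mul_inv] using h

lemma measurable_branch : Measurable (branch ε b) :=
  measurable_const.div (measurable_const.add measurable_id)

lemma hasDerivAt_branch (hbx : b + x ≠ 0) : HasDerivAt (branch ε b) (-ε / (b + x) ^ 2) x := by
  have h := (((hasDerivAt_id x).const_add (b : ℝ)).inv hbx).const_mul ε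
  have hfun : branch ε b = fun y => ε * (fun x => (b : ℝ) + id x)⁻¹ y := by
    funext y; simp [branch, div_eq_mul_inv]
  rw [hfun]
  exact h.congr_deriv (by simp only [id]; ring)

end branch

lemma branch_one_mem_Ioo {k : ℕ} {x : ℝ} (hx : x ∈ Ioo (G - 2) G) :
    branch 1 (2 * k + 1) x ∈ Ioo 0 G := by
  have hbx := add_pos_of_mem_Ioo (b := 2 * k + 1) (by omega) hx
  refine ⟨div_pos one_pos hbx, ?_⟩
  rw [branch, div_lt_iff₀ hbx]
  push_cast at hbx ⊢
  nlinarith [G_sq, hx.1, one_lt_G, (k.cast_nonneg : (0 : ℝ) ≤ k)]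

lemma branch_neg_one_mem_Ioo {k : ℕ} {x : ℝ} (hx : x ∈ Ioo (G - 2) G) :
    branch (-1) (2 * k + 3) x ∈ Ioo (G - 2) 0 := by
  have hbx := add_pos_of_mem_Ioo (b := 2 * k + 3) (by omega) hx
  refine ⟨?_, div_neg_of_neg_of_pos (by norm_num) hbx⟩
  rw [branch, lt_div_iff₀ hbx]
  push_cast at hbx ⊢
  nlinarith [G_sq, hx.1, G_lt_two, (k.cast_nonneg : (0 : ℝ) ≤ k)]

lemma preimage_tauO_inter_Ioo_zero_G {A : Set ℝ} (hA : A ⊆ Ioo (G - 2) G) :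
    tauO ⁻¹' A ∩ Ioo 0 G = ⋃ k : ℕ, branch 1 (2 * k + 1) '' A := by
  ext y
  simp only [mem_inter_iff, mem_preimage, mem_iUnion, mem_image]
  constructor
  · rintro ⟨hyA, hy0, hyG⟩
    have hceil : -1 < ⌈1 / |y| - G⌉ := by
      rw [Int.lt_ceil, abs_of_pos hy0]
      push_cast
      rw [lt_sub_iff_add_lt, lt_div_iff₀ hy0]
      nlinarith [G_sq, one_lt_G]
    obtain ⟨m, hm⟩ := odd_bO y
    lift m to ℕ using (by linarith [ceil_le_bO y])
    refine ⟨m, tauO y, hyA, ?_⟩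
    rw [← hm, branch, bO_add_tauO, abs_of_pos hy0, one_div_one_div]
  · rintro ⟨k, x, hx, rfl⟩
    have hbx := add_pos_of_mem_Ioo (b := 2 * k + 1) (by omega) (hA hx)
    refine ⟨?_, branch_one_mem_Ioo (hA hx)⟩
    rwa [tauO_branch (by simp) (odd_two_mul_add_one _) (hA hx) hbx]

lemma preimage_tauO_inter_Ioo_G_sub_two_zero {A : Set ℝ} (hA : A ⊆ Ioo (G - 2) G) :
    tauO ⁻¹' A ∩ Ioo (G - 2) 0 = ⋃ k : ℕ, branch (-1) (2 * k + 3) '' A := by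
  ext y
  simp only [mem_inter_iff, mem_preimage, mem_iUnion, mem_image]
  constructor
  · rintro ⟨hyA, hyG, hy0⟩
    have hceil : 1 < ⌈1 / |y| - G⌉ := by
      rw [Int.lt_ceil, abs_of_neg hy0]
      push_cast
      rw [lt_sub_iff_add_lt, lt_div_iff₀ (neg_pos.mpr hy0)]
      nlinarith [G_sq, G_lt_two]
    obtain ⟨m, hm⟩ := odd_bO y
    lift m - 1 to ℕ using (by linarith [ceil_le_bO y]) with k hk
    refine ⟨k, tauO y, hyA, ?_⟩
    rw [show (2 * k + 3 : ℤ) = bO y by omega, branch, bO_add_tauO, abs_of_neg hy0,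
      div_div_eq_mul_div, div_one, neg_one_mul, neg_neg]
  · rintro ⟨k, x, hx, rfl⟩
    have hbx := add_pos_of_mem_Ioo (b := 2 * k + 3) (by omega) (hA hx)
    refine ⟨?_, branch_neg_one_mem_Ioo (hA hx)⟩
    rwa [tauO_branch (by simp) ⟨k + 1, by ring⟩ (hA hx) hbx]

lemma pairwise_disjoint_image_branch {ε : ℝ} (hε : |ε| = 1) {b : ℕ → ℤ}
    (hb : ∀ k, Odd (b k) ∧ 1 ≤ b k) (hinj : Function.Injective b) {A : Set ℝ}
    (hA : A ⊆ Ioo (G - 2) G) :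
    Pairwise (Function.onFun Disjoint fun k => branch ε (b k) '' A) := by
  intro j k hjk
  rw [Function.onFun, disjoint_left]
  rintro _ ⟨x, hx, rfl⟩ ⟨x', hx', h⟩
  refine hjk (hinj ?_)
  rw [← bO_branch hε (hb j).1 (hA hx) (add_pos_of_mem_Ioo (hb j).2 (hA hx)), ← h,
    bO_branch hε (hb k).1 (hA hx') (add_pos_of_mem_Ioo (hb k).2 (hA hx'))]

lemma lintegral_image_branch {A : Set ℝ} (hA : MeasurableSet A) {ε : ℝ} (hε : |ε| = 1) {b : ℤ}
    (hpos : ∀ x ∈ A, 0 < b + x ∧ 0 < b + x + ε) :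
    ∫⁻ y in branch ε b '' A, ENNReal.ofReal (1 / (1 + y))
      = ∫⁻ x in A, ENNReal.ofReal (1 / ((b + x) * (b + x + ε))) := by
  have hε₀ : ε ≠ 0 := by rintro rfl; simp at hε
  rw [lintegral_image_eq_lintegral_abs_deriv_mul hA
    (fun x hx => (hasDerivAt_branch (hpos x hx).1.ne').hasDerivWithinAt)
    (branch_injective hε₀).injOn]
  refine setLIntegral_congr_fun hA fun x hx => ?_
  obtain ⟨h₁, h₂⟩ := hpos x hx
  rw [← ENNReal.ofReal_mul (abs_nonneg _), abs_div, abs_neg, hε, abs_of_pos (by positivity),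
    branch]
  congr 1
  field_simp

lemma nuO_apply (S : Set ℝ) :
    nuO S = ∫⁻ y in S ∩ Ioo (G - 2) G, ENNReal.ofReal (1 / (1 + y)) := by
  rw [nuO, withDensity_apply', Measure.restrict_restrict' measurableSet_Ioo]

lemma nuO_apply_of_subset {S : Set ℝ} (hS : S ⊆ Ioo (G - 2) G) :
    nuO S = ∫⁻ y in S, ENNReal.ofReal (1 / (1 + y)) := by
  rw [nuO_apply, inter_eq_self_of_subset_left hS]

lemma nuO_eq_lintegral_add {S : Set ℝ} (hS : MeasurableSet S) :
    nuO S = (∫⁻ y in S ∩ Ioo 0 G, ENNReal.ofReal (1 / (1 + y)))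
      + ∫⁻ y in S ∩ Ioo (G - 2) 0, ENNReal.ofReal (1 / (1 + y)) := by
  have hae :
      (S ∩ Ioo (G - 2) G : Set ℝ) =ᵐ[volume] (S ∩ Ioo 0 G ∪ S ∩ Ioo (G - 2) 0 : Set ℝ) := by
    rw [← Ioc_union_Ioo_eq_Ioo (b := 0) (by linarith [G_lt_two]) (by linarith [one_lt_G]),
      inter_union_distrib_left, union_comm]
    exact (ae_eq_refl _).union ((ae_eq_refl S).inter Ioo_ae_eq_Ioc.symm)
  have hdisj : Disjoint (S ∩ Ioo 0 G) (S ∩ Ioo (G - 2) 0) :=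
    disjoint_left.mpr fun _ h₁ h₂ => lt_asymm h₁.2.1 h₂.2.2
  rw [nuO_apply, setLIntegral_congr hae, lintegral_union (hS.inter measurableSet_Ioo) hdisj]

lemma hasSum_one_div_add_mul_add_one {a : ℝ} (ha : 0 < a) :
    HasSum (fun n : ℕ => 1 / ((n + a) * (n + a + 1))) (1 / a) := by
  set g : ℕ → ℝ := fun n => 1 / (n + a)
  have hterm : ∀ n : ℕ, 1 / ((n + a) * (n + a + 1)) = g n - g (n + 1) := fun n => by
    have : (0 : ℝ) < n + a := by positivity
    simp only [g]; push_cast; field_simp; ring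
  have hg : Tendsto g atTop (𝓝 0) := by
    simpa only [g, one_div, Function.comp_def] using
      tendsto_inv_atTop_zero.comp (tendsto_atTop_add_const_right _ a tendsto_natCast_atTop_atTop)
  simp_rw [hterm]
  rw [hasSum_iff_tendsto_nat_of_nonneg]
  · simp_rw [Finset.sum_range_sub']
    simpa [g] using hg.const_sub (g 0)
  · intro n
    rw [← hterm]
    positivity

lemma tsum_ofReal_one_div_add_mul_add_one {a : ℝ} (ha : 0 < a) :
    ∑' n : ℕ, ENNReal.ofReal (1 / ((n + a) * (n + a + 1))) = ENNReal.ofReal (1 / a) := by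
  have h := hasSum_one_div_add_mul_add_one ha
  rw [← ENNReal.ofReal_tsum_of_nonneg (fun n => by positivity) h.summable, h.tsum_eq]

lemma measurableSet_image_branch {ε : ℝ} (hε : ε ≠ 0) {b : ℤ} {A : Set ℝ}
    (hA : MeasurableSet A) : MeasurableSet (branch ε b '' A) :=
  hA.image_of_measurable_injOn measurable_branch (branch_injective hε).injOn

lemma lintegral_preimage_tauO_inter_Ioo_zero_G {A : Set ℝ} (hAm : MeasurableSet A)
    (hA : A ⊆ Ioo (G - 2) G) :
    ∫⁻ y in tauO ⁻¹' A ∩ Ioo 0 G, ENNReal.ofReal (1 / (1 + y))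
      = ∑' k : ℕ, ∫⁻ x in A, ENNReal.ofReal (1 / ((2 * k + 1 + x) * (2 * k + 2 + x))) := by
  have hb (k : ℕ) : Odd (2 * k + 1 : ℤ) ∧ 1 ≤ (2 * k + 1 : ℤ) := ⟨odd_two_mul_add_one _, by omega⟩
  rw [preimage_tauO_inter_Ioo_zero_G hA,
    lintegral_iUnion (fun k => measurableSet_image_branch one_ne_zero hAm)
      (pairwise_disjoint_image_branch (by simp) hb (fun j k h => by dsimp only at h; omega) hA)]
  refine tsum_congr fun k => ?_
  rw [lintegral_image_branch hAm (by simp) fun x hx => by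
    have := neg_one_lt_of_mem_Ioo (hA hx)
    push_cast
    constructor <;> linarith [k.cast_nonneg (α := ℝ)]]
  push_cast
  ring_nf

lemma lintegral_preimage_tauO_inter_Ioo_G_sub_two_zero {A : Set ℝ} (hAm : MeasurableSet A)
    (hA : A ⊆ Ioo (G - 2) G) :
    ∫⁻ y in tauO ⁻¹' A ∩ Ioo (G - 2) 0, ENNReal.ofReal (1 / (1 + y))
      = ∑' k : ℕ, ∫⁻ x in A, ENNReal.ofReal (1 / ((2 * k + 2 + x) * (2 * k + 3 + x))) := by
  have hb (k : ℕ) : Odd (2 * k + 3 : ℤ) ∧ 1 ≤ (2 * k + 3 : ℤ) := ⟨⟨k + 1, by ring⟩, by omega⟩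
  rw [preimage_tauO_inter_Ioo_G_sub_two_zero hA,
    lintegral_iUnion (fun k => measurableSet_image_branch (by norm_num) hAm)
      (pairwise_disjoint_image_branch (by simp) hb (fun j k h => by dsimp only at h; omega) hA)]
  refine tsum_congr fun k => ?_
  rw [lintegral_image_branch hAm (by simp) fun x hx => by
    have := neg_one_lt_of_mem_Ioo (hA hx)
    push_cast
    constructor <;> linarith [k.cast_nonneg (α := ℝ)]]
  push_cast
  ring_nf

lemma tsum_even_add_tsum_odd_eq {x : ℝ} (hx : -1 < x) :
    (∑' k : ℕ, ENNReal.ofReal (1 / ((2 * k + 1 + x) * (2 * k + 2 + x))))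
      + ∑' k : ℕ, ENNReal.ofReal (1 / ((2 * k + 2 + x) * (2 * k + 3 + x)))
      = ENNReal.ofReal (1 / (1 + x)) := by
  rw [← tsum_ofReal_one_div_add_mul_add_one (a := 1 + x) (by linarith), ← tsum_even_add_odd
    (f := fun n : ℕ => ENNReal.ofReal (1 / ((n + (1 + x)) * (n + (1 + x) + 1))))
    ENNReal.summable ENNReal.summable]
  congr 1 <;> refine tsum_congr fun k => ?_ <;> push_cast <;> ring_nf

lemma isFiniteMeasure_nuO : IsFiniteMeasure nuO := by
  have hcont : ContinuousOn (fun v : ℝ => 1 / (1 + v)) (Icc (G - 2) G) :=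
    continuousOn_const.div (continuousOn_const.add continuousOn_id) fun v hv => by
      linarith [hv.1, one_lt_G]
  exact isFiniteMeasure_withDensity_ofReal
    (hcont.integrableOn_Icc.mono_set Ioo_subset_Icc_self).hasFiniteIntegral

/-- `ν_o` is a finite `τ_o`-invariant measure on `(G−2, G)`. -/
theorem nuO_finite_and_invariant :
    IsFiniteMeasure nuO ∧
    ∀ A : Set ℝ, MeasurableSet A → A ⊆ Ioo (G - 2) G →
      nuO (tauO ⁻¹' A) = nuO A := by
  refine ⟨isFiniteMeasure_nuO, fun A hAm hA => ?_⟩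
  calc nuO (tauO ⁻¹' A)
      = (∑' k : ℕ, ∫⁻ x in A, ENNReal.ofReal (1 / ((2 * k + 1 + x) * (2 * k + 2 + x))))
        + ∑' k : ℕ, ∫⁻ x in A, ENNReal.ofReal (1 / ((2 * k + 2 + x) * (2 * k + 3 + x))) := by
        rw [nuO_eq_lintegral_add (measurable_tauO hAm),
          lintegral_preimage_tauO_inter_Ioo_zero_G hAm hA,
          lintegral_preimage_tauO_inter_Ioo_G_sub_two_zero hAm hA]
    _ = ∫⁻ x in A, (∑' k : ℕ, ENNReal.ofReal (1 / ((2 * k + 1 + x) * (2 * k + 2 + x))))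
        + ∑' k : ℕ, ENNReal.ofReal (1 / ((2 * k + 2 + x) * (2 * k + 3 + x))) := by
        rw [lintegral_add_left (by fun_prop), lintegral_tsum (fun _ => by fun_prop),
          lintegral_tsum (fun _ => by fun_prop)]
    _ = ∫⁻ x in A, ENNReal.ofReal (1 / (1 + x)) :=
        setLIntegral_congr_fun hAm fun x hx =>
          tsum_even_add_tsum_odd_eq (neg_one_lt_of_mem_Ioo (hA hx))
    _ = nuO A := (nuO_apply_of_subset hA).symm
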